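/- arXiv:math/0409372 — 5 statements merged into one kernel-verified Lean document; each statement's English description precedes it below -/
import Mathlib

section
/- Let p be an odd prime and k an even positive integer. The number of integers i with 0 ≤ i ≤ k/2 and 2i ≡ k (mod p), where i = k/2 is excluded when 4 ∤ k, equals 1 + ⌊k/(2p)⌋ if 4 | k and ⌊k/(2p)⌋ if 4 ∤ k. -/
lemma aux_card_mod (p m : ℕ) (hp : 0 < p) :
    ((Finset.range (m + 1)).filter (fun i => i % p = m % p)).card = m / p + 1 := by
  have hset : (Finset.range (m + 1)).filter (fun i => i % p = m % p)
      = (Finset.range (m / p + 1)).image (fun j => m - j * p) := by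
    ext i
    simp only [Finset.mem_filter, Finset.mem_range, Finset.mem_image]
    constructor
    · rintro ⟨hi, hmod⟩
      have hi' : i ≤ m := by omega
      have hdvd : p ∣ (m - i) := by
        have := Nat.sub_mod_eq_zero_of_mod_eq hmod.symm
        exact Nat.dvd_of_mod_eq_zero this
      obtain ⟨c, hc⟩ := hdvd
      rw [mul_comm] at hc
      refine ⟨c, ?_, ?_⟩
      · have h1 : c * p ≤ m := by omega
        have := Nat.le_div_iff_mul_le hp |>.mpr h1
        omega
      · omega
    · rintro ⟨j, hj, rfl⟩
      have hjp : j * p ≤ m := by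
        have := (Nat.le_div_iff_mul_le hp).mp (by omega : j ≤ m / p)
        omega
      constructor
      · omega
      · conv_rhs => rw [show m = (m - j * p) + j * p by omega]
        rw [Nat.add_mul_mod_self_right]
  rw [hset, Finset.card_image_of_injOn, Finset.card_range]
  intro a ha b hb hab
  have hab : m - a * p = m - b * p := hab
  simp only [Finset.coe_range, Set.mem_Iio] at ha hb
  have ha' : a * p ≤ m := by
    have := (Nat.le_div_iff_mul_le hp).mp (by omega : a ≤ m / p); omega
  have hb' : b * p ≤ m := by
    have := (Nat.le_div_iff_mul_le hp).mp (by omega : b ≤ m / p); omega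
  have : a * p = b * p := by omega
  exact Nat.eq_of_mul_eq_mul_right hp this

/-- For `p` an odd prime and `k` an even positive integer, the number of
integers `i` with `0 ≤ i ≤ k/2`, `2i ≡ k (mod p)`, excluding `i = k/2` when `4 ∤ k`,
equals `1 + ⌊k/(2p)⌋` if `4 ∣ k` and `⌊k/(2p)⌋` otherwise. -/
theorem dim_inertia_invariants_sym_k_kl2 (p k : ℕ) (hp : p.Prime) (hodd : Odd p)
    (hk : 0 < k) (hke : Even k) :
    ((Finset.range (k / 2 + 1)).filter
        (fun i => (2 * i) % p = k % p ∧ (i = k / 2 → 4 ∣ k))).card =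
      if 4 ∣ k then k / (2 * p) + 1 else k / (2 * p) := by
  set m := k / 2 with hm
  have hk2 : k = 2 * m := by
    obtain ⟨c, hc⟩ := hke; omega
  have hpp : 0 < p := hp.pos
  have hcop : Nat.Coprime 2 p :=
    (Nat.coprime_primes Nat.prime_two hp).mpr (by
      rintro rfl; exact (Nat.not_odd_iff_even.mpr even_two) hodd)
  have hcond : ∀ i, (2 * i) % p = k % p ↔ i % p = m % p := by
    intro i
    rw [hk2]
    constructor
    · intro h
      have : 2 * i ≡ 2 * m [MOD p] := h
      exact (Nat.ModEq.cancel_left_of_coprime hcop.symm this)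
    · intro h
      exact Nat.ModEq.mul_left 2 h
  have hdiv : k / (2 * p) = m / p := by
    rw [hk2, Nat.mul_div_mul_left _ _ (by norm_num)]
  by_cases h4 : 4 ∣ k
  · rw [if_pos h4, hdiv]
    rw [show (Finset.range (m + 1)).filter
        (fun i => (2 * i) % p = k % p ∧ (i = m → 4 ∣ k))
        = (Finset.range (m + 1)).filter (fun i => i % p = m % p) by
      apply Finset.filter_congr
      intro i _
      simp [hcond i, h4]]
    exact aux_card_mod p m hpp
  · rw [if_neg h4, hdiv]
    have hset : (Finset.range (m + 1)).filter
        (fun i => (2 * i) % p = k % p ∧ (i = m → 4 ∣ k))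
        = ((Finset.range (m + 1)).filter (fun i => i % p = m % p)).erase m := by
      ext i
      simp only [Finset.mem_filter, Finset.mem_erase, Finset.mem_range, hcond i]
      constructor
      · rintro ⟨hi, hmod, hne⟩
        exact ⟨fun h => h4 (hne h), hi, hmod⟩
      · rintro ⟨hne, hi, hmod⟩
        exact ⟨hi, hmod, fun h => absurd h hne⟩
    rw [hset, Finset.card_erase_of_mem (by simp), aux_card_mod p m hpp]
    simp
end

section
/- Let n be a prime, p a prime different from n such that p has multiplicative order n-1 modulo n, and let ζ be a primitive n-th root of unity in an algebraic closure of F_p. If j_0, j_1, ..., j_{n-1} are integers with j_0 + j_1 ζ + ... + j_{n-1} ζ^{n-1} = 0 in the algebraic closure of F_p, then j_0 ≡ j_1 ≡ ... ≡ j_{n-1} (mod p). -/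
open Polynomial

lemma aux_minpoly_ge (n p : ℕ) [Fact p.Prime] (hn : n.Prime)
    (hord : orderOf ((p : ZMod n)) = n - 1)
    (ζ : AlgebraicClosure (ZMod p)) (hζ : orderOf ζ = n) :
    n - 1 ≤ (minpoly (ZMod p) ζ).natDegree := by
  have hn0 : 0 < n := hn.pos
  have hζn : ζ ^ n = 1 := by rw [← hζ]; exact pow_orderOf_eq_one ζ
  have hζ0 : ζ ≠ 0 := by
    intro h
    rw [h, zero_pow hn0.ne'] at hζn
    exact zero_ne_one hζn
  have hint : IsIntegral (ZMod p) ζ := Algebra.IsIntegral.isIntegral ζ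
  set F := IntermediateField.adjoin (ZMod p) {ζ} with hF
  haveI : FiniteDimensional (ZMod p) F := IntermediateField.adjoin.finiteDimensional hint
  haveI : Finite F := Module.finite_of_finite (ZMod p)
  haveI : Fintype F := Fintype.ofFinite F
  set d := Module.finrank (ZMod p) F with hd
  have hcard : Fintype.card F = p ^ d := by
    rw [Module.card_eq_pow_finrank (K := ZMod p), ZMod.card]
  let ζ' : F := IntermediateField.AdjoinSimple.gen (ZMod p) ζ
  have hmap : algebraMap F (AlgebraicClosure (ZMod p)) ζ' = ζ := IntermediateField.AdjoinSimple.algebraMap_gen _ _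
  have hord' : orderOf ζ' = n := by
    rw [← hζ, ← hmap]
    exact (orderOf_injective (algebraMap F (AlgebraicClosure (ZMod p))).toMonoidHom (algebraMap F (AlgebraicClosure (ZMod p))).injective ζ').symm
  have hζ'0 : ζ' ≠ 0 := by
    intro h
    apply hζ0
    rw [← hmap, h, map_zero]
  have hpow : ζ' ^ (p ^ d - 1) = 1 := by
    rw [← hcard]; exact FiniteField.pow_card_sub_one_eq_one ζ' hζ'0
  have hdvd : n ∣ p ^ d - 1 := hord' ▸ orderOf_dvd_of_pow_eq_one hpow
  have hp1 : 1 ≤ p ^ d := Nat.one_le_pow _ _ (Fact.out : p.Prime).pos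
  have hcast : ((p : ZMod n)) ^ d = 1 := by
    have h0 : ((p ^ d - 1 : ℕ) : ZMod n) = 0 := (ZMod.natCast_eq_zero_iff _ _).mpr hdvd
    rw [Nat.cast_sub hp1] at h0
    push_cast at h0
    rwa [sub_eq_zero] at h0
  have hdvd2 : (n - 1) ∣ d := hord ▸ orderOf_dvd_of_pow_eq_one hcast
  have hd0 : 0 < d := Module.finrank_pos
  have := Nat.le_of_dvd hd0 hdvd2
  rwa [hd, IntermediateField.adjoin.finrank hint] at this

set_option maxHeartbeats 1000000 in
/-- Let `n` be a prime, `p` a prime different from `n` with `p` of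
multiplicative order `n-1` modulo `n`, and `ζ` a primitive `n`-th root of unity in an
algebraic closure of `𝔽_p`. If `j₀ + j₁ζ + ⋯ + j_{n-1}ζ^{n-1} = 0` for integers
`j_i`, then `j₀ ≡ j₁ ≡ ⋯ ≡ j_{n-1} (mod p)`. -/
theorem coeffs_congr_mod_p_of_zeta_sum_eq_zero (n p : ℕ) [Fact p.Prime] (hn : n.Prime)
    (hne : p ≠ n) (hord : orderOf ((p : ZMod n)) = n - 1)
    (ζ : AlgebraicClosure (ZMod p)) (hζ : orderOf ζ = n)
    (j : Fin n → ℤ)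
    (hj : ∑ i, (j i : AlgebraicClosure (ZMod p)) * ζ ^ (i : ℕ) = 0) :
    ∀ a b : Fin n, j a ≡ j b [ZMOD p] := by
  have h2 : 2 ≤ n := hn.two_le
  have hint : IsIntegral (ZMod p) ζ := Algebra.IsIntegral.isIntegral ζ
  have hζn : ζ ^ n = 1 := by rw [← hζ]; exact pow_orderOf_eq_one ζ
  have hζ1 : ζ ≠ 1 := by
    intro h; rw [h, orderOf_one] at hζ; omega
  have hgeom : ∑ i ∈ Finset.range n, ζ ^ i = 0 := by
    have h := geom_sum_mul ζ n
    rw [hζn, sub_self] at h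
    rcases mul_eq_zero.mp h with h' | h'
    · exact h'
    · exact absurd (sub_eq_zero.mp h') hζ1
  set c : ℕ → ZMod p := fun i => if h : i < n then ((j ⟨i, h⟩ : ℤ) : ZMod p) else 0 with hc
  set t : ZMod p := c (n - 1) with ht
  set b : ℕ → ZMod p := fun i => c i - t with hb
  have hrel : ∑ i ∈ Finset.range n,
      (algebraMap (ZMod p) (AlgebraicClosure (ZMod p)) (c i)) * ζ ^ i = 0 := by
    rw [← Fin.sum_univ_eq_sum_range
      (fun k => algebraMap (ZMod p) (AlgebraicClosure (ZMod p)) (c k) * ζ ^ k) n, ← hj]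
    apply Finset.sum_congr rfl
    intro i _
    simp [hc, i.isLt, map_intCast]
  have hsum0 : ∑ i ∈ Finset.range n,
      algebraMap (ZMod p) (AlgebraicClosure (ZMod p)) (b i) * ζ ^ i = 0 := by
    simp only [hb, map_sub, sub_mul]
    rw [Finset.sum_sub_distrib, hrel, ← Finset.mul_sum, hgeom, mul_zero, sub_zero]
  have hbn : b (n - 1) = 0 := sub_self t
  have hsum1 : ∑ i ∈ Finset.range (n - 1),
      algebraMap (ZMod p) (AlgebraicClosure (ZMod p)) (b i) * ζ ^ i = 0 := by
    have hn' : n = (n - 1) + 1 := by omega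
    rw [hn', Finset.sum_range_succ, hbn, map_zero, zero_mul, add_zero] at hsum0
    exact hsum0
  set Q : Polynomial (ZMod p) := ∑ i : Fin (n - 1), Polynomial.C (b (i : ℕ)) * Polynomial.X ^ (i : ℕ) with hQ
  have hdeg : Q.degree < ((n - 1 : ℕ) : WithBot ℕ) := by
    rw [hQ]; exact Polynomial.degree_sum_fin_lt (fun i : Fin (n - 1) => b (i : ℕ))
  have haev : Polynomial.aeval ζ Q = 0 := by
    rw [hQ, map_sum]
    simp only [map_mul, Polynomial.aeval_C, map_pow, Polynomial.aeval_X]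
    rw [Fin.sum_univ_eq_sum_range
      (fun i => algebraMap (ZMod p) (AlgebraicClosure (ZMod p)) (b i) * ζ ^ i) (n - 1)]
    exact hsum1
  have hQ0 : Q = 0 := by
    by_contra h
    have h1 := minpoly.degree_le_of_ne_zero (ZMod p) ζ h haev
    have hge := aux_minpoly_ge n p hn hord ζ hζ
    have h3 : ((n - 1 : ℕ) : WithBot ℕ) ≤ (minpoly (ZMod p) ζ).degree := by
      rw [Polynomial.degree_eq_natDegree (minpoly.ne_zero hint)]
      exact_mod_cast hge
    exact absurd (lt_of_le_of_lt (h3.trans h1) hdeg) (lt_irrefl _)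
  have hball : ∀ i, i < n - 1 → b i = 0 := by
    intro i hi
    have hco : Q.coeff i = b i := by
      rw [hQ, Polynomial.finset_sum_coeff]
      rw [Finset.sum_eq_single (⟨i, hi⟩ : Fin (n - 1))]
      · simp [Polynomial.coeff_C_mul, Polynomial.coeff_X_pow]
      · intro k _ hk
        rw [Polynomial.coeff_C_mul, Polynomial.coeff_X_pow, if_neg, mul_zero]
        intro h; exact hk (Fin.ext h.symm)
      · simp
    rw [hQ0, Polynomial.coeff_zero] at hco
    exact hco.symm
  have hceq : ∀ a : Fin n, c a = t := by
    intro a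
    by_cases h : (a : ℕ) < n - 1
    · have := hball a h
      rw [hb] at this
      exact sub_eq_zero.mp this
    · have : (a : ℕ) = n - 1 := by omega
      rw [ht, ← this]
  intro a b'
  rw [← ZMod.intCast_eq_intCast_iff]
  have h1 := (hceq a).trans (hceq b').symm
  simpa [hc, a.isLt, b'.isLt] using h1
end

section
/- Let n be a prime, p a prime different from n with p of multiplicative order n-1 modulo n, k a positive integer, and ζ a primitive n-th root of unity in the algebraic closure of F_p. Let r be the unique integer with 0 ≤ r < p and n·r ≡ k (mod p). Then the number of n-tuples (j_0, ..., j_{n-1}) of non-negative integers with j_0 + ... + j_{n-1} = k and j_0 + j_1 ζ + ... + j_{n-1} ζ^{n-1} = 0 in F equals the binomial coefficient C((k - n·r)/p + n - 1, n - 1) if k ≥ n·r, and 0 otherwise. -/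
open Polynomial Finset


lemma aux_count (n M : ℕ) (hn : 0 < n) :
    {m : Fin n → ℕ | ∑ i, m i = M}.ncard = (M + n - 1).choose (n - 1) := by
  classical
  have h2 : M ≤ M + n - 1 := by omega
  have e1 : n + M - 1 = M + n - 1 := by omega
  have e2 : M + n - 1 - M = n - 1 := by omega
  have h1 : {m : Fin n → ℕ | ∑ i, m i = M}.ncard
      = Nat.card {m : Fin n → ℕ // ∑ i, m i = M} := by
    rw [← Nat.card_coe_set_eq]; rfl
  have h3 : Nat.card (Sym (Fin n) M) = Nat.multichoose n M := by
    rw [Nat.card_eq_fintype_card, Sym.card_sym_eq_multichoose, Fintype.card_fin]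
  rw [h1, ← Nat.card_congr (Sym.equivNatSumOfFintype (Fin n) M), h3, Nat.multichoose_eq]
  rw [e1, ← Nat.choose_symm h2, e2]



lemma aux_deg (n p : ℕ) [Fact p.Prime] (hn : n.Prime) (hne : p ≠ n)
    (hord : orderOf ((p : ZMod n)) = n - 1)
    (ζ : AlgebraicClosure (ZMod p)) (hζ : orderOf ζ = n) :
    n - 1 ≤ (minpoly (ZMod p) ζ).natDegree := by
  classical
  have hn2 : 2 ≤ n := hn.two_le
  have hζn : ζ ^ n = 1 := hζ ▸ pow_orderOf_eq_one ζ
  have hint : IsIntegral (ZMod p) ζ := Algebra.IsIntegral.isIntegral ζ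
  set K := IntermediateField.adjoin (ZMod p) {ζ} with hK
  haveI : FiniteDimensional (ZMod p) K :=
    IntermediateField.adjoin.finiteDimensional hint
  haveI : Finite K := Module.finite_of_finite (ZMod p)
  haveI : Fintype K := Fintype.ofFinite K
  set d := (minpoly (ZMod p) ζ).natDegree with hd
  have hfr : Module.finrank (ZMod p) K = d := IntermediateField.adjoin.finrank hint
  have hcard : Fintype.card K = p ^ d := by
    rw [Module.card_eq_pow_finrank (K := ZMod p), hfr, ZMod.card]
  -- the generator has order n in K
  have hmem : ζ ∈ K := IntermediateField.mem_adjoin_simple_self (ZMod p) ζ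
  set x : K := ⟨ζ, hmem⟩ with hx
  have hordx : orderOf x = n := by
    rw [← hζ]
    exact (orderOf_injective K.val.toMonoidHom (Subtype.coe_injective) x).symm
  have hx0 : x ≠ 0 := by
    intro h
    have h2 : x ^ n = 1 := hordx ▸ pow_orderOf_eq_one x
    rw [h, zero_pow (by omega : n ≠ 0)] at h2
    exact zero_ne_one h2
  have hdvd : n ∣ p ^ d - 1 := by
    have h3 : orderOf (isUnit_iff_ne_zero.mpr hx0).unit ∣ Fintype.card Kˣ := orderOf_dvd_card
    rwa [Fintype.card_units, hcard, ← orderOf_units, IsUnit.unit_spec, hordx] at h3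
  -- transfer to ZMod n
  have hpd : (p : ZMod n) ^ d = 1 := by
    have h1 : (1:ℕ) ≤ p ^ d := Nat.one_le_pow _ _ (Fact.out : p.Prime).pos
    have : (p ^ d : ℕ) ≡ 1 [MOD n] := ((Nat.modEq_iff_dvd' h1).mpr hdvd).symm
    have := (ZMod.natCast_eq_natCast_iff _ _ _).mpr this
    push_cast at this
    exact this
  have := orderOf_dvd_of_pow_eq_one hpd
  rw [hord] at this
  have hd0 : 0 < d := minpoly.natDegree_pos hint
  exact Nat.le_of_dvd hd0 this



lemma aux_linind (n p : ℕ) [Fact p.Prime] (hn : n.Prime)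
    (ζ : AlgebraicClosure (ZMod p))
    (hdeg : n - 1 ≤ (minpoly (ZMod p) ζ).natDegree)
    (g : ℕ → ZMod p)
    (hg : ∑ i ∈ Finset.range (n - 1),
      algebraMap (ZMod p) (AlgebraicClosure (ZMod p)) (g i) * ζ ^ i = 0) :
    ∀ i < n - 1, g i = 0 := by
  classical
  set q : (ZMod p)[X] := ∑ i ∈ Finset.range (n - 1), monomial i (g i) with hq
  have haev : aeval ζ q = 0 := by
    rw [hq, map_sum]
    simpa only [aeval_monomial] using hg
  have hqdeg : q.natDegree ≤ n - 2 := by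
    apply Polynomial.natDegree_sum_le_of_forall_le
    intro i hi
    exact le_trans (Polynomial.natDegree_monomial_le (g i)) (by
      have := Finset.mem_range.mp hi; omega)
  have hq0 : q = 0 := by
    by_contra hne
    have h1 := minpoly.degree_le_of_ne_zero (ZMod p) ζ hne haev
    have h2 : (minpoly (ZMod p) ζ).natDegree ≤ q.natDegree :=
      Polynomial.natDegree_le_natDegree h1
    have hn2 : 2 ≤ n := hn.two_le
    omega
  intro i hi
  have := congrArg (fun q => Polynomial.coeff q i) hq0
  simp only [hq, Polynomial.finset_sum_coeff, Polynomial.coeff_monomial,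
    Polynomial.coeff_zero] at this
  rwa [Finset.sum_ite_eq' (Finset.range (n-1)) i g, if_pos (Finset.mem_range.mpr hi)] at this

lemma aux_const (n p : ℕ) [Fact p.Prime] (hn : n.Prime)
    (ζ : AlgebraicClosure (ZMod p)) (hζ : orderOf ζ = n)
    (hdeg : n - 1 ≤ (minpoly (ZMod p) ζ).natDegree)
    (c : Fin n → ZMod p) :
    ∑ i, algebraMap (ZMod p) (AlgebraicClosure (ZMod p)) (c i) * ζ ^ (i : ℕ) = 0 ↔
      ∃ a, ∀ i, c i = a := by
  classical
  have hn2 : 2 ≤ n := hn.two_le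
  have hζn : ζ ^ n = 1 := hζ ▸ pow_orderOf_eq_one ζ
  have hζ1 : ζ ≠ 1 := by
    intro h; rw [h, orderOf_one] at hζ; omega
  have hgeom : ∑ i ∈ Finset.range n, ζ ^ i = 0 := by
    rw [geom_sum_eq hζ1, hζn, sub_self, zero_div]
  set A := algebraMap (ZMod p) (AlgebraicClosure (ZMod p)) with hA
  set c' : ℕ → ZMod p := fun i => if h : i < n then c ⟨i, h⟩ else 0 with hc'
  have hcc : ∀ i : Fin n, c' (i : ℕ) = c i := by
    intro i; simp [hc', i.isLt]
  have hconv : ∑ i, A (c i) * ζ ^ (i : ℕ) = ∑ i ∈ Finset.range n, A (c' i) * ζ ^ i := by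
    rw [← Fin.sum_univ_eq_sum_range (fun i => A (c' i) * ζ ^ i) n]
    exact Finset.sum_congr rfl fun i _ => by rw [hcc]
  constructor
  · intro h0
    rw [hconv] at h0
    set a := c' (n - 1) with ha
    have hsub : ∑ i ∈ Finset.range n, A (c' i - a) * ζ ^ i = 0 := by
      have h2 : ∑ i ∈ Finset.range n, A a * ζ ^ i = 0 := by
        rw [← Finset.mul_sum, hgeom, mul_zero]
      calc ∑ i ∈ Finset.range n, A (c' i - a) * ζ ^ i
          = ∑ i ∈ Finset.range n, (A (c' i) * ζ ^ i - A a * ζ ^ i) := by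
            apply Finset.sum_congr rfl; intro i _; rw [map_sub]; ring
        _ = 0 := by rw [Finset.sum_sub_distrib, h0, h2, sub_zero]
    have hn1 : n - 1 + 1 = n := by omega
    rw [← hn1, Finset.sum_range_succ] at hsub
    rw [← ha, sub_self, map_zero, zero_mul, add_zero] at hsub
    have hzero := aux_linind n p hn ζ hdeg (fun i => c' i - a) hsub
    refine ⟨a, fun i => ?_⟩
    rcases lt_or_ge (i : ℕ) (n - 1) with h | h
    · have := hzero i h
      have h3 : c' (i : ℕ) = a := by
        have := sub_eq_zero.mp this; exact this
      rw [← hcc i, h3]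
    · have hieq : (i : ℕ) = n - 1 := by omega
      rw [← hcc i, hieq]
  · rintro ⟨a, haa⟩
    rw [hconv]
    have : ∀ i ∈ Finset.range n, A (c' i) * ζ ^ i = A a * ζ ^ i := by
      intro i hi
      have hi' : i < n := Finset.mem_range.mp hi
      rw [show c' i = a from by rw [hc']; simp [hi', haa]]
    rw [Finset.sum_congr rfl this, ← Finset.mul_sum, hgeom, mul_zero]

/-- Let `n` be a prime, `p` a prime different from `n` with `p` of
multiplicative order `n-1` mod `n`, `k` a positive integer, `ζ` a primitive `n`-th root
of unity in the algebraic closure of `𝔽_p`, and `r` the unique integer with `0 ≤ r < p`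
and `n·r ≡ k (mod p)`. Then the number of `n`-tuples of non-negative integers
`(j₀,…,j_{n-1})` with `∑ jᵢ = k` and `∑ jᵢ ζ^i = 0` equals
`C((k - n·r)/p + n - 1, n - 1)` if `k ≥ n·r`, and `0` otherwise. -/
theorem card_S_k_n_p_eq_choose (n p k r : ℕ) [Fact p.Prime] (hn : n.Prime)
    (hne : p ≠ n) (hord : orderOf ((p : ZMod n)) = n - 1) (hk : 0 < k)
    (ζ : AlgebraicClosure (ZMod p)) (hζ : orderOf ζ = n)
    (hr : r < p) (hrk : n * r ≡ k [MOD p]) :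
    {j : Fin n → ℕ | ∑ i, j i = k ∧
        ∑ i, (j i : AlgebraicClosure (ZMod p)) * ζ ^ (i : ℕ) = 0}.ncard =
      if n * r ≤ k then Nat.choose ((k - n * r) / p + n - 1) (n - 1) else 0 := by
  classical
  have hp : p.Prime := Fact.out
  have hn2 : 2 ≤ n := hn.two_le
  have F := AlgebraicClosure (ZMod p)
  have hdeg := aux_deg n p hn hne hord ζ hζ
  have hnp : ¬ p ∣ n := fun h => hne ((Nat.prime_dvd_prime_iff_eq hp hn).mp h)
  have hn0 : (n : ZMod p) ≠ 0 := fun h => hnp ((ZMod.natCast_eq_zero_iff n p).mp h)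
  -- characterize the set
  have hset : {j : Fin n → ℕ | ∑ i, j i = k ∧ ∑ i, (j i : AlgebraicClosure (ZMod p)) * ζ ^ (i : ℕ) = 0}
      = {j : Fin n → ℕ | ∑ i, j i = k ∧ ∀ i, j i % p = r} := by
    ext j
    simp only [Set.mem_setOf_eq]
    have hconv : ∑ i, (j i : AlgebraicClosure (ZMod p)) * ζ ^ (i : ℕ)
        = ∑ i, algebraMap (ZMod p) (AlgebraicClosure (ZMod p)) ((j i : ZMod p)) * ζ ^ (i : ℕ) := by
      apply Finset.sum_congr rfl
      intro i _
      rw [map_natCast]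
    constructor
    · rintro ⟨hsum, halg⟩
      refine ⟨hsum, ?_⟩
      rw [hconv] at halg
      obtain ⟨a, ha⟩ := (aux_const n p hn ζ hζ hdeg _).mp halg
      -- k = n * a in ZMod p
      have hk1 : (k : ZMod p) = (n : ZMod p) * a := by
        rw [← hsum]
        push_cast
        rw [Finset.sum_congr rfl fun i _ => ha i]
        simp [Finset.card_univ, mul_comm]
      have hk2 : (k : ZMod p) = (n : ZMod p) * (r : ZMod p) := by
        have := (ZMod.natCast_eq_natCast_iff _ _ _).mpr hrk
        push_cast at this
        exact this.symm
      have har : a = (r : ZMod p) := by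
        apply mul_left_cancel₀ hn0
        rw [← hk1, hk2]
      intro i
      have hji : ((j i : ZMod p)) = ((r : ZMod p)) := by rw [ha i, har]
      have := (ZMod.natCast_eq_natCast_iff' _ _ _).mp hji
      rwa [Nat.mod_eq_of_lt hr] at this
    · rintro ⟨hsum, hmod⟩
      refine ⟨hsum, ?_⟩
      rw [hconv]
      apply (aux_const n p hn ζ hζ hdeg _).mpr
      refine ⟨(r : ZMod p), fun i => ?_⟩
      rw [← ZMod.natCast_mod (j i) p, hmod i]
  rw [hset]
  by_cases hle : n * r ≤ k
  · rw [if_pos hle]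
    have hpd : p ∣ k - n * r := (Nat.modEq_iff_dvd' hle).mp hrk
    set M := (k - n * r) / p with hM
    have hpM : p * M = k - n * r := Nat.mul_div_cancel' hpd
    have himg : {j : Fin n → ℕ | ∑ i, j i = k ∧ ∀ i, j i % p = r}
        = (fun m : Fin n → ℕ => fun i => r + p * m i) '' {m : Fin n → ℕ | ∑ i, m i = M} := by
      ext j
      simp only [Set.mem_setOf_eq, Set.mem_image]
      constructor
      · rintro ⟨hsum, hmod⟩
        refine ⟨fun i => j i / p, ?_, ?_⟩
        · have hji : ∀ i, j i = r + p * (j i / p) := by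
            intro i
            have h1 := Nat.div_add_mod (j i) p
            rw [hmod i] at h1
            omega
          have hs2 : ∑ i, j i = n * r + p * ∑ i, j i / p := by
            calc ∑ i, j i = ∑ i, (r + p * (j i / p)) :=
                  Finset.sum_congr rfl fun i _ => hji i
              _ = n * r + p * ∑ i, j i / p := by
                  rw [Finset.sum_add_distrib, ← Finset.mul_sum]
                  simp [Finset.card_univ, mul_comm]
          rw [hsum] at hs2
          apply Nat.eq_of_mul_eq_mul_left hp.pos
          show p * ∑ i, j i / p = p * M
          omega
        · funext i
          show r + p * (j i / p) = j i
          have h1 := Nat.div_add_mod (j i) p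
          rw [hmod i] at h1
          omega
      · rintro ⟨m, hm, rfl⟩
        constructor
        · calc ∑ i, (r + p * m i) = n * r + p * ∑ i, m i := by
                rw [Finset.sum_add_distrib, ← Finset.mul_sum]
                simp [Finset.card_univ, mul_comm]
          _ = k := by rw [hm, hpM]; omega
        · intro i
          rw [Nat.add_mul_mod_self_left, Nat.mod_eq_of_lt hr]
    rw [himg, Set.ncard_image_of_injective _ (fun m m' h => by
      funext i
      have := congrFun h i
      exact Nat.eq_of_mul_eq_mul_left hp.pos (by omega))]
    exact aux_count n M (by omega)
  · rw [if_neg hle]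
    have : {j : Fin n → ℕ | ∑ i, j i = k ∧ ∀ i, j i % p = r} = ∅ := by
      ext j
      simp only [Set.mem_setOf_eq, Set.mem_empty_iff_false, iff_false, not_and]
      intro hsum hmod
      have : ∀ i : Fin n, r ≤ j i := fun i => (hmod i) ▸ Nat.mod_le (j i) p
      have hge : n * r ≤ ∑ i, j i := by
        calc n * r = ∑ _i : Fin n, r := by simp [Finset.card_univ, mul_comm]
        _ ≤ ∑ i, j i := Finset.sum_le_sum fun i _ => this i
      omega
    rw [this, Set.ncard_empty]
end

section
/- Let V be an n-dimensional vector space over a field of characteristic zero with basis e_0, ..., e_{n-1}, and let g be the linear automorphism with g(e_i) = e_{i+1} for 0 ≤ i ≤ n-2 and g(e_{n-1}) = β e_0, where β = 1 if n is odd and β = -1 if n is even. Then for a monomial e^j = e_0^{j_0} ⋯ e_{n-1}^{j_{n-1}} in Sym^k(V) with j_0 + ... + j_{n-1} = k, the vector v_j = Σ_{i=0}^{n-1} β^{j_{n-1}+...+j_{n-i}} e^{σ^i(j)} (with σ the cyclic shift σ(j_0,...,j_{n-1}) = (j_{n-1}, j_0, ..., j_{n-2})) is fixed by the induced action of g on Sym^k(V),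 provided n is odd or k is even. -/
/-- Multi-indices: exponent vectors `j : ZMod n → ℕ` of total degree `k`, indexing the
monomial basis `e^j = e₀^{j₀} ⋯ e_{n-1}^{j_{n-1}}` of `Sym^k(V)` for `V` an
`n`-dimensional space with basis `e₀, …, e_{n-1}` (indices taken cyclically). -/
abbrev MultiIdx (n k : ℕ) [NeZero n] := {j : ZMod n → ℕ // ∑ i, j i = k}

/-- The monomial basis vector `e^j` of `Sym^k(V)`, modeling `Sym^k(V)` as the space of
coefficient functions `MultiIdx n k → F`. -/
def symBasis {n k : ℕ} [NeZero n] (F : Type*) [Field F] (j : MultiIdx n k) :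
    MultiIdx n k → F :=
  fun m => if m = j then 1 else 0

/-- The cyclic shift `σ(j₀, …, j_{n-1}) = (j_{n-1}, j₀, …, j_{n-2})` on multi-indices. -/
def cycShift {n k : ℕ} [NeZero n] (j : MultiIdx n k) : MultiIdx n k :=
  ⟨fun i => j.1 (i - 1),
    (Fintype.sum_equiv (Equiv.subRight (1 : ZMod n)) _ (fun i => j.1 i)
      (fun i => rfl)).trans j.2⟩

/-- The induced action of `g` on `Sym^k(V)`, where `g e_i = e_{i+1}` for `i ≤ n-2` and
`g e_{n-1} = β e₀`; on monomials `g (e^j) = β^{j_{n-1}} e^{σ(j)}`, hence on coefficient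
functions `(g v) m = β^{m₀} v (σ⁻¹ m)`. -/
def symGAct {n k : ℕ} [NeZero n] {F : Type*} [Field F] (β : F)
    (v : MultiIdx n k → F) : MultiIdx n k → F :=
  fun m => β ^ (m.1 0) * v ⟨fun i => m.1 (i + 1),
    (Fintype.sum_equiv (Equiv.addRight (1 : ZMod n)) _ (fun i => m.1 i)
      (fun i => rfl)).trans m.2⟩

/-- The vector `v_j = ∑_{i=0}^{n-1} β^{j_{n-1} + ⋯ + j_{n-i}} e^{σ^i(j)}` in
`Sym^k(V)`. -/
def symVj {n k : ℕ} [NeZero n] (F : Type*) [Field F] (β : F) (j : MultiIdx n k) :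
    MultiIdx n k → F :=
  ∑ i ∈ Finset.range n,
    β ^ (∑ t ∈ Finset.range i, j.1 (-(t : ZMod n) - 1)) • symBasis F (cycShift^[i] j)

/-
The induced action of `g` sends `e^{σ^i(j)}` to `β^{(σ^i j)_{n-1}} e^{σ^{i+1}(j)}`, and
`(σ^i j)_{n-1} = j_{n-1-i}`, so `g` maps the `i`-th term of `v_j` exactly onto the `(i+1)`-st.
The sum is therefore invariant once the `n`-th term, `β^{j_0 + ⋯ + j_{n-1}} e^{σ^n(j)} = β^k e^j`,
agrees with the `0`-th, i.e. once `β^k = 1`: this holds when `β = 1` (`n` odd) or `k` is even.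
-/

theorem Finset.sum_range_add_one_eq_of_eq {M : Type*} [AddCancelCommMonoid M] (f : ℕ → M)
    (n : ℕ) (hf : f n = f 0) :
    ∑ i ∈ range n, f (i + 1) = ∑ i ∈ range n, f i := by
  apply add_right_cancel (b := f 0)
  rw [← sum_range_succ', sum_range_succ, hf]

theorem sum_range_natCast_zmod {M : Type*} [AddCommMonoid M] (n : ℕ) [NeZero n]
    (g : ZMod n → M) : ∑ t ∈ Finset.range n, g t = ∑ i : ZMod n, g i := by
  refine Finset.sum_nbij' (fun t => (t : ZMod n)) ZMod.val ?_ ?_ ?_ ?_ ?_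
  · exact fun _ _ => Finset.mem_univ _
  · exact fun i _ => Finset.mem_range.mpr (ZMod.val_lt i)
  · exact fun t ht => ZMod.val_natCast_of_lt (Finset.mem_range.mp ht)
  · exact fun i _ => ZMod.natCast_zmod_val i
  · exact fun _ _ => rfl

section

variable {n k : ℕ} [NeZero n] {F : Type*} [Field F]

theorem cycShift_iterate_apply (j : MultiIdx n k) (i : ℕ) (x : ZMod n) :
    (cycShift^[i] j).1 x = j.1 (x - i) := by
  induction i generalizing x with
  | zero => simp
  | succ i ih =>
    rw [Function.iterate_succ_apply']
    change (cycShift^[i] j).1 (x - 1) = _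
    rw [ih, Nat.cast_succ, sub_sub, add_comm]

theorem cycShift_iterate_self (j : MultiIdx n k) : cycShift^[n] j = j :=
  Subtype.ext <| funext fun x => by rw [cycShift_iterate_apply, ZMod.natCast_self, sub_zero]

theorem sum_range_apply_neg_sub_one (j : MultiIdx n k) :
    ∑ t ∈ Finset.range n, j.1 (-(t : ZMod n) - 1) = k := by
  rw [sum_range_natCast_zmod n (fun t => j.1 (-t - 1))]
  refine .trans ?_ j.2
  exact Fintype.sum_equiv (Equiv.subLeft (-1 : ZMod n)) _ _ fun i => by
    simp only [Equiv.subLeft_apply]; ring_nf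

theorem symGAct_smul (β c : F) (v : MultiIdx n k → F) :
    symGAct β (c • v) = c • symGAct β v := by
  funext m
  simp only [symGAct, Pi.smul_apply, smul_eq_mul]
  ring

theorem symGAct_sum (β : F) {ι : Type*} (s : Finset ι) (v : ι → MultiIdx n k → F) :
    symGAct β (∑ i ∈ s, v i) = ∑ i ∈ s, symGAct β (v i) := by
  funext m
  simp [symGAct, Finset.mul_sum]

theorem symGAct_symBasis (β : F) (j : MultiIdx n k) :
    symGAct β (symBasis F j) = β ^ j.1 (-1) • symBasis F (cycShift j) := by
  funext m
  simp only [symGAct, symBasis, Pi.smul_apply, smul_eq_mul]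
  split_ifs with hpre hm hm
  · subst hm
    change β ^ j.1 (0 - 1) * 1 = _
    rw [zero_sub]
  · refine absurd (Subtype.ext <| funext fun i => ?_) hm
    rw [← hpre]
    exact congrArg m.1 (sub_add_cancel i 1).symm
  · subst hm
    refine absurd (Subtype.ext <| funext fun i => ?_) hpre
    exact congrArg j.1 (add_sub_cancel_right i 1 :)
  · simp

def symVjTerm (β : F) (j : MultiIdx n k) (i : ℕ) : MultiIdx n k → F :=
  β ^ (∑ t ∈ Finset.range i, j.1 (-(t : ZMod n) - 1)) • symBasis F (cycShift^[i] j)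

theorem symVj_eq_sum_symVjTerm (β : F) (j : MultiIdx n k) :
    symVj F β j = ∑ i ∈ Finset.range n, symVjTerm β j i :=
  rfl

theorem symGAct_symVjTerm (β : F) (j : MultiIdx n k) (i : ℕ) :
    symGAct β (symVjTerm β j i) = symVjTerm β j (i + 1) := by
  rw [symVjTerm, symVjTerm, symGAct_smul, symGAct_symBasis, smul_smul, ← pow_add,
    Finset.sum_range_succ, cycShift_iterate_apply, Function.iterate_succ_apply', neg_sub_comm]

theorem symVjTerm_n_eq_symVjTerm_zero (β : F) (hβk : β ^ k = 1) (j : MultiIdx n k) :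
    symVjTerm β j n = symVjTerm β j 0 := by
  simp only [symVjTerm, sum_range_apply_neg_sub_one, hβk, cycShift_iterate_self,
    Finset.sum_range_zero, pow_zero, Function.iterate_zero, id_eq]

end

theorem symGAct_fixes_vj_general (n k : ℕ) [NeZero n] (F : Type*) [Field F]
    (β : F) (hβ : β = if Odd n then 1 else -1) (h : Odd n ∨ Even k)
    (j : MultiIdx n k) :
    symGAct β (symVj F β j) = symVj F β j := by
  have hβk : β ^ k = 1 := by
    rcases h with hn | hk
    · rw [hβ, if_pos hn, one_pow]
    · split_ifs at hβ <;> simp [hβ, hk.neg_one_pow]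
  rw [symVj_eq_sum_symVjTerm, symGAct_sum]
  simp_rw [symGAct_symVjTerm]
  exact Finset.sum_range_add_one_eq_of_eq _ n (symVjTerm_n_eq_symVjTerm_zero β hβk j)

/-- Let `V` be an `n`-dimensional vector space over a field of
characteristic zero with basis `e₀, …, e_{n-1}`, and `g` the automorphism with
`g e_i = e_{i+1}` (`i ≤ n-2`) and `g e_{n-1} = β e₀`, where `β = 1` if `n` is odd and
`β = -1` if `n` is even. If `n` is odd or `k` is even, then for any multi-index `j` of
degree `k`, the vector `v_j` is fixed by the induced action of `g` on `Sym^k(V)`. -/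
theorem symGAct_fixes_vj (n k : ℕ) [NeZero n] (F : Type*) [Field F] [CharZero F]
    (β : F) (hβ : β = if Odd n then 1 else -1) (h : Odd n ∨ Even k)
    (j : MultiIdx n k) :
    symGAct β (symVj F β j) = symVj F β j :=
  symGAct_fixes_vj_general n k F β hβ h j
end

section
/- For positive integers n and k with n coprime to p, let d_k(n,p) be the number of n-tuples (j_0,...,j_{n-1}) of non-negative integers with j_0 + ... + j_{n-1} = k and j_0 + j_1 ζ + ... + j_{n-1} ζ^{n-1} = 0 in an algebraic closure of F_p, where ζ is a primitive n-th root of unity. Then C(k+n-1, n-1) - d_k(n,p) is divisible by n. -/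
open MulAction in
lemma free_mulAction_card_dvd {G β : Type*} [Group G] [Fintype G] [Fintype β] [MulAction G β]
    (h : ∀ (g : G) (b : β), g • b = b → g = 1) :
    Fintype.card G ∣ Fintype.card β := by
  classical
  have hstab : ∀ b : β, stabilizer G b = ⊥ := by
    intro b
    ext g
    simp only [mem_stabilizer_iff, Subgroup.mem_bot]
    exact ⟨fun hg => h g b hg, fun hg => hg ▸ one_smul G b⟩
  have hone : ∀ b : β, Fintype.card (stabilizer G b) = 1 := by
    intro b
    rw [← Nat.card_eq_fintype_card, hstab]
    simp
  rw [MulAction.card_eq_sum_card_group_div_card_stabilizer G β]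
  simp only [hone, Nat.div_one]
  rw [Finset.sum_const, smul_eq_mul]
  exact Dvd.intro_left _ rfl

/-- For positive integers `n` and `k` with `n` coprime to the prime `p`,
let `d_k(n,p)` be the number of `n`-tuples `(j₀,…,j_{n-1})` of non-negative integers
with `∑ jᵢ = k` and `∑ jᵢ ζ^i = 0` in an algebraic closure of `𝔽_p`, where `ζ` is a
primitive `n`-th root of unity. Then `n` divides `C(k+n-1, n-1) - d_k(n,p)`. -/
theorem n_dvd_choose_sub_d_k (n k p : ℕ) [Fact p.Prime] (hn : 0 < n) (hk : 0 < k)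
    (hp : ¬ p ∣ n) (ζ : AlgebraicClosure (ZMod p)) (hζ : orderOf ζ = n) :
    (n : ℤ) ∣ (Nat.choose (k + n - 1) (n - 1) : ℤ) -
      ({j : Fin n → ℕ | ∑ i, j i = k ∧
          ∑ i, (j i : AlgebraicClosure (ZMod p)) * ζ ^ (i : ℕ) = 0}.ncard : ℤ) := by
  classical
  haveI : NeZero n := ⟨hn.ne'⟩
  have hζn : ζ ^ n = 1 := by rw [← hζ]; exact pow_orderOf_eq_one ζ
  have hζ0 : ζ ≠ 0 := by
    intro h0
    rw [h0, zero_pow hn.ne'] at hζn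
    exact zero_ne_one hζn
  have hpow : ∀ m : ℕ, ζ ^ (m % n) = ζ ^ m := by
    intro m
    rw [← hζ]
    exact pow_mod_orderOf ζ m
  set w : (Fin n → ℕ) → AlgebraicClosure (ZMod p) :=
    fun j => ∑ i, (j i : AlgebraicClosure (ZMod p)) * ζ ^ (i : ℕ) with hwdef
  have hshift : ∀ (j : Fin n → ℕ) (d : Fin n),
      w (fun i => j (i + d)) * ζ ^ (d : ℕ) = w j := by
    intro j d
    rw [hwdef]
    simp only
    rw [Finset.sum_mul]
    have h1 : ∀ i : Fin n, (j (i + d) : AlgebraicClosure (ZMod p)) * ζ ^ (i : ℕ) * ζ ^ (d : ℕ)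
        = (j (i + d) : AlgebraicClosure (ZMod p)) * ζ ^ ((i + d : Fin n) : ℕ) := by
      intro i
      rw [mul_assoc, ← pow_add, Fin.val_add, hpow]
    rw [Finset.sum_congr rfl fun i _ => h1 i]
    exact Equiv.sum_comp (Equiv.addRight d)
      (fun x => (j x : AlgebraicClosure (ZMod p)) * ζ ^ (x : ℕ))
  have hsum : ∀ (j : Fin n → ℕ) (d : Fin n), ∑ i, j (i + d) = ∑ i, j i :=
    fun j d => Equiv.sum_comp (Equiv.addRight d) j
  set T : Finset (Fin n → ℕ) := Finset.piAntidiag Finset.univ k with hT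
  have hmemT : ∀ j : Fin n → ℕ, j ∈ T ↔ ∑ i, j i = k := by
    intro j
    rw [hT, Finset.mem_piAntidiag]
    simp
  set S : Finset (Fin n → ℕ) := T.filter (fun j => w j = 0) with hS
  set F : Finset (Fin n → ℕ) := T.filter (fun j => ¬ w j = 0) with hF
  have hcards : S.card + F.card = T.card := Finset.card_filter_add_card_filter_not _
  have hsetS : {j : Fin n → ℕ | ∑ i, j i = k ∧
      ∑ i, (j i : AlgebraicClosure (ZMod p)) * ζ ^ (i : ℕ) = 0} = ↑S := by
    ext j
    simp only [Set.mem_setOf_eq, hS, Finset.coe_filter, hmemT j, hwdef]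
  have hTcard : T.card = (k + n - 1).choose (n - 1) := by
    have h2 : T.card = ((Finset.univ : Finset (Fin n)).sym k).card := by
      rw [hT, ← Finset.map_sym_eq_piAntidiag, Finset.card_map]
    rw [h2, Finset.sym_univ, Finset.card_univ, Sym.card_sym_eq_choose, Fintype.card_fin]
    rw [← Nat.choose_symm (by omega : n - 1 ≤ k + n - 1)]
    congr 1 <;> omega
  have hdvd : n ∣ F.card := by
    have hFmem : ∀ (j : Fin n → ℕ) (d : Fin n), j ∈ F → (fun i => j (i + d)) ∈ F := by
      intro j d hj
      rw [hF, Finset.mem_filter] at hj ⊢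
      refine ⟨(hmemT _).2 (by rw [hsum j d]; exact (hmemT j).1 hj.1), ?_⟩
      intro h0
      apply hj.2
      rw [← hshift j d, h0, zero_mul]
    letI : MulAction (Multiplicative (Fin n)) {x // x ∈ F} :=
      { smul := fun g x => ⟨fun i => x.1 (i + Multiplicative.toAdd g), hFmem x.1 _ x.2⟩
        one_smul := fun x => Subtype.ext (funext fun i => by
          show x.1 (i + Multiplicative.toAdd (1 : Multiplicative (Fin n))) = x.1 i
          simp
        )
        mul_smul := fun g h x => Subtype.ext (funext fun i => by
          show x.1 (i + Multiplicative.toAdd (g * h))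
            = x.1 (i + Multiplicative.toAdd g + Multiplicative.toAdd h)
          rw [toAdd_mul, add_assoc]
        ) }
    have hfree : ∀ (g : Multiplicative (Fin n)) (x : {x // x ∈ F}), g • x = x → g = 1 := by
      intro g x hgx
      by_contra hg
      set d : Fin n := Multiplicative.toAdd g with hd
      have hdne : d ≠ 0 := by
        intro h0
        exact hg (by rw [← ofAdd_toAdd g, ← hd, h0, ofAdd_zero])
      have hper : ∀ i, x.1 (i + d) = x.1 i := fun i =>
        congr_fun (congrArg Subtype.val hgx) i
      have hw0 : w x.1 = 0 := by
        have hsh := hshift x.1 d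
        have hfun : (fun i => x.1 (i + d)) = x.1 := funext hper
        rw [hfun] at hsh
        have hz : w x.1 * (ζ ^ (d : ℕ) - 1) = 0 := by
          rw [mul_sub, hsh, mul_one, sub_self]
        rcases mul_eq_zero.1 hz with h | h
        · exact h
        · exfalso
          have hζd : ζ ^ (d : ℕ) = 1 := by
            have := sub_eq_zero.1 h
            exact this
          have hdvd' := orderOf_dvd_of_pow_eq_one hζd
          rw [hζ] at hdvd'
          have hlt : (d : ℕ) < n := d.isLt
          have hne : (d : ℕ) ≠ 0 := fun h0 => hdne (Fin.ext h0)
          have := Nat.le_of_dvd (Nat.pos_of_ne_zero hne) hdvd'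
          omega
      exact (Finset.mem_filter.1 x.2).2 hw0
    have hmain := free_mulAction_card_dvd hfree
    simpa using hmain
  rw [hsetS, Set.ncard_coe_finset]
  obtain ⟨c, hc⟩ := hdvd
  have hfin : (Nat.choose (k + n - 1) (n - 1) : ℤ) - S.card = n * c := by
    rw [← hTcard, ← hcards, hc]
    push_cast
    ring
  rw [hfin]
  exact Dvd.intro c rfl
end
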